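/- Let U ⊆ ℂ^n be open and let ψ : U → ℝ be a C² function with ψ < −1 on U and with everywhere nonnegative Levi form (L_ψ(x; v) ≥ 0 for all x ∈ U, v ∈ ℂ^n). Define η := −ψ + log(−ψ) and λ := (1 − ψ)². Then for every x ∈ U and every v ∈ ℂ^n one has −L_η(x; v) − λ(x)^{-1} |∂η(x)(v)|² ≥ L_ψ(x; v). (This is the curvature computation for the auxiliary functions η_ε and λ_ε in the paper's proof of its main extension theorem, Theorem 1.1/4.1.) -/

import Mathlib

open MeasureTheory Metric Complex Set ENNReal

noncomputable section

/-- Lebesgue measure on `ℂⁿ` (with its Euclidean metric structure). -/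
noncomputable instance (n : ℕ) : MeasureSpace (EuclideanSpace ℂ (Fin n)) :=
  ⟨Measure.map (WithLp.toLp 2) (volume : Measure (Fin n → ℂ))⟩

instance (n : ℕ) : BorelSpace (EuclideanSpace ℂ (Fin n)) :=
  inferInstance

/-- The canonical extension of a nonpositive-infinity-allowing value to `ℝ≥0∞`:
`⊤ ↦ ⊤`, `⊥ ↦ 0`, reals to `ENNReal.ofReal`. -/
def EReal.toENNReal' (x : EReal) : ℝ≥0∞ :=
  if x = ⊤ then ⊤ else ENNReal.ofReal x.toReal

/-- The integral of an `EReal`-valued function: upper part minus lower part,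
computed with Lebesgue upper integrals and `EReal` subtraction. -/
def eIntegral {α : Type*} [MeasurableSpace α] (μ : Measure α) (f : α → EReal) : EReal :=
  ((∫⁻ a, (f a).toENNReal' ∂μ : ℝ≥0∞) : EReal) - ((∫⁻ a, (-(f a)).toENNReal' ∂μ : ℝ≥0∞) : EReal)

/-- `e^x ∈ [0,∞]` for `x ∈ [-∞,∞]`. -/
def eexp (x : EReal) : ℝ≥0∞ :=
  if x = ⊤ then ⊤ else if x = ⊥ then 0 else ENNReal.ofReal (Real.exp x.toReal)

/-- A function `u : ℂⁿ → [-∞,∞)` is plurisubharmonic on an open set `U` if it is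
upper semicontinuous on `U`, takes the value `⊤` nowhere on `U`, is not identically `⊥`
on any connected component of `U`, and satisfies the sub-mean value inequality on every
sufficiently small circle in every complex direction. -/
def IsPSH {n : ℕ} (U : Set (EuclideanSpace ℂ (Fin n))) (u : EuclideanSpace ℂ (Fin n) → EReal) :
    Prop :=
  UpperSemicontinuousOn u U ∧
  (∀ x ∈ U, u x ≠ ⊤) ∧
  (∀ x ∈ U, ∃ y ∈ connectedComponentIn U x, u y ≠ ⊥) ∧
  ∀ a ∈ U, ∀ b : EuclideanSpace ℂ (Fin n), ∃ r₀ > (0:ℝ), ∀ r : ℝ, 0 < r → r < r₀ →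
    (∀ θ : ℝ, a + ((r : ℂ) * Complex.exp (θ * Complex.I)) • b ∈ U) ∧
    u a ≤ (((2 * Real.pi)⁻¹ : ℝ) : EReal) *
      eIntegral (volume.restrict (Set.Ioc (0:ℝ) (2 * Real.pi)))
        (fun θ : ℝ => u (a + ((r : ℂ) * Complex.exp (θ * Complex.I)) • b))

/-- A set `E`, closed in an open set `Ω ⊆ ℂⁿ`, is complete pluripolar in `Ω` if every point
of `E` has an open neighborhood `U ⊆ Ω` carrying a plurisubharmonic function `φ` with
`E ∩ U = φ⁻¹(-∞)`. -/
def CompletePluripolarIn {n : ℕ} (Ω E : Set (EuclideanSpace ℂ (Fin n))) : Prop :=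
  ∀ x ∈ E, ∃ U : Set (EuclideanSpace ℂ (Fin n)), IsOpen U ∧ x ∈ U ∧ U ⊆ Ω ∧
    ∃ φ : EuclideanSpace ℂ (Fin n) → EReal, IsPSH U φ ∧ E ∩ U = {y ∈ U | φ y = ⊥}

/-- A bounded pseudoconvex domain in `ℂⁿ`: a bounded nonempty connected open set on which
`z ↦ -log dist(z, ℂⁿ ∖ Ω)` is plurisubharmonic. -/
def BoundedPseudoconvexDomain {n : ℕ} (Ω : Set (EuclideanSpace ℂ (Fin n))) : Prop :=
  IsOpen Ω ∧ IsConnected Ω ∧ Bornology.IsBounded Ω ∧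
  IsPSH Ω (fun z => ((-Real.log (Metric.infDist z Ωᶜ) : ℝ) : EReal))

/-- The Levi form of a real-valued function `u` on `ℂⁿ` at `x` in direction `v`:
`(1/4)` times the Laplacian at `w = 0` of `w ↦ u (x + w v)`. -/
def Levi {n : ℕ} (u : EuclideanSpace ℂ (Fin n) → ℝ) (x v : EuclideanSpace ℂ (Fin n)) : ℝ :=
  ((fderiv ℝ (fun w : ℂ => fderiv ℝ (fun w' : ℂ => u (x + w' • v)) w) 0) 1 1 +
   (fderiv ℝ (fun w : ℂ => fderiv ℝ (fun w' : ℂ => u (x + w' • v)) w) 0) Complex.I Complex.I) / 4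

/-- The `(1,0)`-differential `∂u(x)(v) = Σⱼ (∂u/∂zⱼ)(x) vⱼ` of a real-valued function `u`
on `ℂⁿ`, computed as `∂g/∂w (0) = (1/2)(∂ₓg - i ∂_y g)(0)` for `g(w) = u(x + w v)`. -/
def del1 {n : ℕ} (u : EuclideanSpace ℂ (Fin n) → ℝ) (x v : EuclideanSpace ℂ (Fin n)) : ℂ :=
  (((fderiv ℝ (fun w : ℂ => u (x + w • v)) 0) 1 : ℝ) -
    Complex.I * ((fderiv ℝ (fun w : ℂ => u (x + w • v)) 0) Complex.I : ℝ)) / 2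

/-! Write `η = F ∘ ψ` with `F t = -t + log (-t)`. The chain rule gives `∂η = F'(ψ) ∂ψ` and
`L_η = F'(ψ) L_ψ + F''(ψ) |∂ψ|²`. Since `F'(t)² / (1 - t)² = 1 / t² = -F''(t)`, the gradient terms
cancel exactly against `λ⁻¹ |∂η|²`, leaving `(1 - 1/ψ) L_ψ ≥ L_ψ`. -/

open Topology

section SecondOrderChainRule

variable {E : Type*} [NormedAddCommGroup E] [NormedSpace ℝ E]

theorem fderiv_comp_eq_smul {g : E → ℝ} {p : E} {F : ℝ → ℝ} {F' : ℝ}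
    (hg : DifferentiableAt ℝ g p) (hF : HasDerivAt F F' (g p)) :
    fderiv ℝ (F ∘ g) p = F' • fderiv ℝ g p :=
  (hF.comp_hasFDerivAt p hg.hasFDerivAt).fderiv

theorem fderiv_fderiv_comp_apply_self {g : E → ℝ} {p : E} (hg : ContDiffAt ℝ 2 g p)
    {F F' : ℝ → ℝ} {F'' : ℝ} (hF : ∀ᶠ t in 𝓝 (g p), HasDerivAt F (F' t) t)
    (hF' : HasDerivAt F' F'' (g p)) (e : E) :
    fderiv ℝ (fderiv ℝ (F ∘ g)) p e e =
      F' (g p) * fderiv ℝ (fderiv ℝ g) p e e + F'' * fderiv ℝ g p e ^ 2 := by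
  have hfderiv : fderiv ℝ (F ∘ g) =ᶠ[𝓝 p] fun y => F' (g y) • fderiv ℝ g y := by
    filter_upwards [hg.eventually (by decide), hg.continuousAt.eventually hF]
      with y hgy hFy
    exact fderiv_comp_eq_smul (hgy.differentiableAt (by norm_num)) hFy
  have hDg : DifferentiableAt ℝ (fderiv ℝ g) p :=
    (hg.fderiv_right (m := 1) (by norm_num)).differentiableAt (by norm_num)
  have hF'g : HasFDerivAt (fun y => F' (g y)) (F'' • fderiv ℝ g p) p :=
    hF'.comp_hasFDerivAt p (hg.differentiableAt (by norm_num)).hasFDerivAt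
  rw [hfderiv.fderiv_eq, (hF'g.fun_smul hDg.hasFDerivAt).fderiv]
  simp only [add_apply, smul_apply, ContinuousLinearMap.smulRight_apply, smul_eq_mul]
  ring

end SecondOrderChainRule

section LeviForm

variable {n : ℕ} {u : EuclideanSpace ℂ (Fin n) → ℝ} {x : EuclideanSpace ℂ (Fin n)}

theorem contDiffAt_comp_line {k : WithTop ℕ∞} (hu : ContDiffAt ℝ k u x)
    (v : EuclideanSpace ℂ (Fin n)) : ContDiffAt ℝ k (fun w : ℂ => u (x + w • v)) 0 := by
  have hline : ContDiff ℝ k (fun w : ℂ => x + w • v) :=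
    contDiff_const.add (contDiff_id.smul contDiff_const)
  exact ContDiffAt.comp (g := u) 0 (by simpa using hu) hline.contDiffAt

theorem differentiableAt_comp_line (hu : DifferentiableAt ℝ u x)
    (v : EuclideanSpace ℂ (Fin n)) :
    DifferentiableAt ℝ (fun w : ℂ => u (x + w • v)) 0 := by
  have hline : DifferentiableAt ℝ (fun w : ℂ => x + w • v) 0 := by fun_prop
  exact DifferentiableAt.comp (g := u) 0 (by simpa using hu) hline

theorem norm_del1_sq (v : EuclideanSpace ℂ (Fin n)) :
    ‖del1 u x v‖ ^ 2 = ((fderiv ℝ (fun w : ℂ => u (x + w • v)) 0) 1 ^ 2 +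
      (fderiv ℝ (fun w : ℂ => u (x + w • v)) 0) Complex.I ^ 2) / 4 := by
  rw [del1, Complex.sq_norm, Complex.normSq_apply]
  simp only [div_ofNat_re, sub_re, ofReal_re, mul_re, I_re, zero_mul, I_im, ofReal_im, mul_zero,
    sub_self, sub_zero, div_ofNat_im, sub_im, mul_im, one_mul, zero_add, zero_sub]
  ring

theorem del1_comp {F : ℝ → ℝ} {F' : ℝ} (hu : DifferentiableAt ℝ u x)
    (hF : HasDerivAt F F' (u x)) (v : EuclideanSpace ℂ (Fin n)) :
    del1 (F ∘ u) x v = F' * del1 u x v := by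
  have hFx : HasDerivAt F F' ((fun w : ℂ => u (x + w • v)) 0) := by simpa using hF
  simp only [del1, Function.comp_def]
  rw [show (fun w : ℂ => F (u (x + w • v))) = F ∘ fun w : ℂ => u (x + w • v) from rfl,
    fderiv_comp_eq_smul (differentiableAt_comp_line hu v) hFx]
  simp only [smul_apply, smul_eq_mul]
  push_cast
  ring

theorem levi_comp {F F' : ℝ → ℝ} {F'' : ℝ} (hu : ContDiffAt ℝ 2 u x)
    (hF : ∀ᶠ t in 𝓝 (u x), HasDerivAt F (F' t) t) (hF' : HasDerivAt F' F'' (u x))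
    (v : EuclideanSpace ℂ (Fin n)) :
    Levi (F ∘ u) x v = F' (u x) * Levi u x v + F'' * ‖del1 u x v‖ ^ 2 := by
  have key := fderiv_fderiv_comp_apply_self (contDiffAt_comp_line hu v) (F := F) (by simpa using hF) (by simpa using hF')
  simp only [zero_smul, add_zero] at key
  rw [norm_del1_sq]
  change (fderiv ℝ (fderiv ℝ (F ∘ fun w : ℂ => u (x + w • v))) 0 1 1 +
    fderiv ℝ (fderiv ℝ (F ∘ fun w : ℂ => u (x + w • v))) 0 Complex.I Complex.I) / 4 = _
  rw [key, key, Levi]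
  ring

end LeviForm

theorem hasDerivAt_neg_add_log_neg {t : ℝ} (ht : t ≠ 0) :
    HasDerivAt (fun s : ℝ => -s + Real.log (-s)) (-1 + t⁻¹) t := by
  have hlog := (Real.hasDerivAt_log (neg_ne_zero.mpr ht)).comp t (hasDerivAt_neg t)
  simp only [inv_neg, mul_neg, mul_one, neg_neg] at hlog
  exact (hasDerivAt_neg t).add hlog

/-- The curvature computation for the auxiliary functions `η = -ψ + log(-ψ)` and
`λ = (1-ψ)²` in the paper's proof of Theorem 1.1/4.1: if `ψ < -1` is `C²` with nonnegative
Levi form on an open set `U ⊆ ℂⁿ`, then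
`-L_η(x; v) - λ(x)⁻¹ |∂η(x)(v)|² ≥ L_ψ(x; v)` on `U`. -/
theorem eta_lambda_curvature_estimate
    {n : ℕ} (U : Set (EuclideanSpace ℂ (Fin n))) (hU : IsOpen U)
    (ψ : EuclideanSpace ℂ (Fin n) → ℝ) (hψC2 : ContDiffOn ℝ 2 ψ U)
    (hψlt : ∀ x ∈ U, ψ x < -1)
    (hψpsh : ∀ x ∈ U, ∀ v : EuclideanSpace ℂ (Fin n), 0 ≤ Levi ψ x v)
    (η lam : EuclideanSpace ℂ (Fin n) → ℝ)
    (hη : ∀ x, η x = -ψ x + Real.log (-ψ x))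
    (hlam : ∀ x, lam x = (1 - ψ x) ^ 2) :
    ∀ x ∈ U, ∀ v : EuclideanSpace ℂ (Fin n),
      Levi ψ x v ≤ -Levi η x v - (lam x)⁻¹ * ‖del1 η x v‖ ^ 2 := by
  intro x hx v
  have hψx : ContDiffAt ℝ 2 ψ x := hψC2.contDiffAt (hU.mem_nhds hx)
  have hs : ψ x < 0 := (hψlt x hx).trans (by norm_num)
  have hF : ∀ᶠ t in 𝓝 (ψ x), HasDerivAt (fun s : ℝ => -s + Real.log (-s)) (-1 + t⁻¹) t :=
    Filter.eventually_of_mem (isOpen_ne.mem_nhds hs.ne) fun t ht => hasDerivAt_neg_add_log_neg ht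
  have hF' : HasDerivAt (fun t : ℝ => -1 + t⁻¹) (-(ψ x ^ 2)⁻¹) (ψ x) :=
    (hasDerivAt_inv hs.ne).const_add (-1)
  rw [show η = (fun s : ℝ => -s + Real.log (-s)) ∘ ψ from funext hη, levi_comp hψx hF hF',
    del1_comp (hψx.differentiableAt (by norm_num)) (hF.self_of_nhds), norm_mul,
    Complex.norm_real, Real.norm_eq_abs, mul_pow, sq_abs, hlam]
  have hcancel : ((1 - ψ x) ^ 2)⁻¹ * (-1 + (ψ x)⁻¹) ^ 2 = (ψ x ^ 2)⁻¹ := by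
    have : 1 - ψ x ≠ 0 := by linarith
    have := hs.ne
    field_simp
    ring
  have hgain : 0 ≤ -(ψ x)⁻¹ * Levi ψ x v :=
    mul_nonneg (neg_nonneg.mpr (inv_nonpos.mpr hs.le)) (hψpsh x hx v)
  linear_combination hgain + ‖del1 ψ x v‖ ^ 2 * hcancel
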